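/- Let 𝒢 = (V, E_1, …, E_ℓ) be a temporal graph, s, z ∈ V distinct with {s,z} ∉ E_t for all t, Δ ≤ ℓ, and let D = (V', E') be the Δ-(s,z)-expansion of 𝒢. Then there is a Δ-restless temporal (s,z)-path of length k in 𝒢 if and only if there is a directed (s,z)-path P' of length k in D such that for every vertex v ∈ V, the path P' visits at most one element of V'(v). -/

import Mathlib

/-- A `Δ`-restless temporal `(s,z)`-path of length `k` in the temporal graph with
layers `E : ℕ → Set (Sym2 V)`: vertices `v 0 = s, …, v k = z` pairwise distinct,
transition `i` uses edge `{v (i-1), v i}` at time `t i ≥ 1`, time stamps are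
non-decreasing and consecutive stamps differ by at most `Δ`. -/
def IsRestlessTemporalPath {V : Type*} (E : ℕ → Set (Sym2 V)) (Δ : ℕ)
    (s z : V) (k : ℕ) (v : ℕ → V) (t : ℕ → ℕ) : Prop :=
  v 0 = s ∧ v k = z ∧
  (∀ i j, i ≤ k → j ≤ k → v i = v j → i = j) ∧
  (∀ i, 1 ≤ i → i ≤ k → 1 ≤ t i ∧ s(v (i - 1), v i) ∈ E (t i)) ∧
  (∀ i, 1 ≤ i → i < k → t i ≤ t (i + 1) ∧ t (i + 1) ≤ t i + Δ)

/-- A (not necessarily restless) temporal `(s,z)`-path. -/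
def IsTemporalPath {V : Type*} (E : ℕ → Set (Sym2 V))
    (s z : V) (k : ℕ) (v : ℕ → V) (t : ℕ → ℕ) : Prop :=
  v 0 = s ∧ v k = z ∧
  (∀ i j, i ≤ k → j ≤ k → v i = v j → i = j) ∧
  (∀ i, 1 ≤ i → i ≤ k → 1 ≤ t i ∧ s(v (i - 1), v i) ∈ E (t i)) ∧
  (∀ i, 1 ≤ i → i < k → t i ≤ t (i + 1))

/-- All time stamps of the path lie within the lifetime `ℓ`. -/
def WithinLifetime (ℓ k : ℕ) (t : ℕ → ℕ) : Prop :=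
  ∀ i, 1 ≤ i → i ≤ k → t i ≤ ℓ

/-- The underlying (static) graph of a temporal graph. -/
def underlyingGraph {V : Type*} (E : ℕ → Set (Sym2 V)) : SimpleGraph V where
  Adj a b := a ≠ b ∧ ∃ τ, s(a, b) ∈ E τ
  symm := ⟨by
    rintro a b ⟨hab, τ, hτ⟩
    exact ⟨hab.symm, τ, by rwa [Sym2.eq_swap] at hτ⟩⟩
  loopless := ⟨fun a h => h.1 rfl⟩

/-- Vertices of the `Δ`-`(s,z)`-expansion: `Sum.inl (v, t)` is the copy `v^t`,
`Sum.inr false` is `s` and `Sum.inr true` is `z`. A copy `v^t` is a vertex of the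
expansion iff `v ∉ {s,z}` and `v` is incident to some edge of layer `t`. -/
def ExpValid {V : Type*} (E : ℕ → Set (Sym2 V)) (s z : V) :
    (V × ℕ) ⊕ Bool → Prop
  | .inl (v, t) => v ≠ s ∧ v ≠ z ∧ ∃ e ∈ E t, v ∈ e
  | .inr _ => True

/-- Arcs of the `Δ`-`(s,z)`-expansion. -/
def ExpArc {V : Type*} (E : ℕ → Set (Sym2 V)) (Δ : ℕ) (s z : V) :
    (V × ℕ) ⊕ Bool → (V × ℕ) ⊕ Bool → Prop
  | .inr false, .inl (v, t) => s(s, v) ∈ E t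
  | .inl (v, i), .inr true => ∃ t, s(v, z) ∈ E t ∧ i ≤ t ∧ t ≤ i + Δ
  | .inl (v, i), .inl (w, t) => s(v, w) ∈ E t ∧ i ≤ t ∧ t ≤ i + Δ
  | _, _ => False

/-- A directed `(s,z)`-path of length `k` in the `Δ`-`(s,z)`-expansion. -/
def IsExpPath {V : Type*} (E : ℕ → Set (Sym2 V)) (Δ : ℕ) (s z : V)
    (k : ℕ) (w : ℕ → (V × ℕ) ⊕ Bool) : Prop :=
  w 0 = Sum.inr false ∧ w k = Sum.inr true ∧
  (∀ i, i ≤ k → ExpValid E s z (w i)) ∧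
  (∀ i j, i ≤ k → j ≤ k → w i = w j → i = j) ∧
  (∀ i, i < k → ExpArc E Δ s z (w i) (w (i + 1)))

/-- there is a `Δ`-restless temporal `(s,z)`-path of length `k` in `𝒢`
iff there is a directed `(s,z)`-path of length `k` in the `Δ`-`(s,z)`-expansion that
visits at most one copy `v^t` of every vertex `v`. -/
theorem restlessTemporalPath_iff_expansion_path {V : Type*}
    (E : ℕ → Set (Sym2 V)) (ℓ Δ : ℕ) (s z : V) (hsz : s ≠ z)
    (hno : ∀ τ, s(s, z) ∉ E τ) (hΔ : Δ ≤ ℓ)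
    (hlife : ∀ τ, (τ < 1 ∨ ℓ < τ) → E τ = ∅) (k : ℕ) :
    (∃ v t, IsRestlessTemporalPath E Δ s z k v t) ↔
    (∃ w : ℕ → (V × ℕ) ⊕ Bool, IsExpPath E Δ s z k w ∧
      ∀ (v : V) (i j τ τ'), i ≤ k → j ≤ k →
        w i = Sum.inl (v, τ) → w j = Sum.inl (v, τ') → i = j) := by
  have hE1 : ∀ (τ : ℕ) (e : Sym2 V), e ∈ E τ → 1 ≤ τ := by
    intro τ e he
    by_contra h
    rw [hlife τ (Or.inl (by omega))] at he
    exact Set.notMem_empty e he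
  constructor
  · rintro ⟨v, t, hv0, hvk, hdist, hedge, hres⟩
    have hk0 : k ≠ 0 := by
      rintro rfl
      exact hsz (hv0.symm.trans hvk)
    have hk1 : k ≠ 1 := by
      rintro rfl
      have h := (hedge 1 le_rfl le_rfl).2
      have h01 : (1 : ℕ) - 1 = 0 := rfl
      rw [h01, hv0, hvk] at h
      exact hno (t 1) h
    have hk2 : 2 ≤ k := by omega
    have hvs : ∀ i, 0 < i → i ≤ k → v i ≠ s := by
      intro i h1 h2 hc
      exact h1.ne' (hdist i 0 h2 (Nat.zero_le k) (hc.trans hv0.symm))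
    have hvz : ∀ i, i < k → v i ≠ z := by
      intro i h2 hc
      exact h2.ne (hdist i k h2.le le_rfl (hc.trans hvk.symm))
    refine ⟨fun i => if i = 0 then .inr false else if i = k then .inr true
        else .inl (v i, t i), ?_, ?_⟩
    all_goals
      set w : ℕ → (V × ℕ) ⊕ Bool := fun i => if i = 0 then .inr false
          else if i = k then .inr true else .inl (v i, t i) with hwdef
      have hw0 : w 0 = .inr false := by simp [hwdef]
      have hwk : w k = .inr true := by simp [hwdef, hk0]
      have hwi : ∀ i, 0 < i → i < k → w i = .inl (v i, t i) := by
        intro i h1 h2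
        simp [hwdef, h1.ne', h2.ne]
    · refine ⟨hw0, hwk, ?_, ?_, ?_⟩
      · -- validity
        intro i hi
        rcases Nat.eq_zero_or_pos i with rfl | hi0
        · rw [hw0]; trivial
        rcases eq_or_lt_of_le hi with rfl | hik
        · rw [hwk]; trivial
        rw [hwi i hi0 hik]
        exact ⟨hvs i hi0 hik.le, hvz i hik,
          s(v (i - 1), v i), (hedge i hi0 hik.le).2, Sym2.mem_mk_right _ _⟩
      · -- injectivity
        intro i j hi hj heq
        rcases Nat.eq_zero_or_pos i with rfl | hi0 <;>
          rcases Nat.eq_zero_or_pos j with rfl | hj0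
        · rfl
        · rcases eq_or_lt_of_le hj with rfl | hjk
          · rw [hw0, hwk] at heq; simp at heq
          · rw [hw0, hwi j hj0 hjk] at heq; simp at heq
        · rcases eq_or_lt_of_le hi with rfl | hik
          · rw [hw0, hwk] at heq; simp at heq
          · rw [hw0, hwi i hi0 hik] at heq; simp at heq
        · rcases eq_or_lt_of_le hi with rfl | hik <;>
            rcases eq_or_lt_of_le hj with h | hjk
          · omega
          · rw [hwk, hwi j hj0 hjk] at heq; simp at heq
          · rw [h, hwk, hwi i hi0 hik] at heq; simp at heq
          · rw [hwi i hi0 hik, hwi j hj0 hjk] at heq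
            simp only [Sum.inl.injEq, Prod.mk.injEq] at heq
            exact hdist i j hik.le hjk.le heq.1
      · -- arcs
        intro i hik
        rcases Nat.eq_zero_or_pos i with rfl | hi0
        · rw [hw0, hwi 1 one_pos (by omega)]
          have h := (hedge 1 le_rfl (by omega)).2
          have h01 : (1 : ℕ) - 1 = 0 := rfl
          rw [h01, hv0] at h
          exact h
        rcases Nat.lt_or_ge (i + 1) k with hik1 | hik1
        · rw [hwi i hi0 (by omega), hwi (i + 1) (by omega) hik1]
          have h := (hedge (i + 1) (by omega) hik1.le).2
          have h2 : i + 1 - 1 = i := rfl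
          rw [h2] at h
          exact ⟨h, (hres i hi0 hik).1, (hres i hi0 hik).2⟩
        · have hik2 : i + 1 = k := by omega
          rw [hwi i hi0 hik, hik2, hwk]
          have h := (hedge k (by omega) le_rfl).2
          have hi' : i = k - 1 := by omega
          refine ⟨t k, ?_, ?_, ?_⟩
          · rw [hvk] at h
            rw [hi']
            exact h
          · rw [← hik2]; exact (hres i hi0 hik).1
          · rw [← hik2]; exact (hres i hi0 hik).2
    · -- one copy per vertex
      intro v0 i j τ τ' hi hj hwi' hwj'
      have hvi : ∀ m τ₀, m ≤ k → w m = Sum.inl (v0, τ₀) → v m = v0 := by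
        intro m τ₀ hm hw
        rcases Nat.eq_zero_or_pos m with rfl | hm0
        · rw [hw0] at hw; simp at hw
        rcases eq_or_lt_of_le hm with rfl | hmk
        · rw [hwk] at hw; simp at hw
        · rw [hwi m hm0 hmk] at hw
          simp only [Sum.inl.injEq, Prod.mk.injEq] at hw
          exact hw.1
      exact hdist i j hi hj ((hvi i τ hi hwi').trans (hvi j τ' hj hwj').symm)
  · rintro ⟨w, ⟨hw0, hwk, hvalid, hinj, harc⟩, hone⟩
    have hk0 : k ≠ 0 := by
      rintro rfl
      rw [hw0] at hwk
      simp at hwk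
    have hint : ∀ i, 0 < i → i < k → ∃ a τ, w i = Sum.inl (a, τ) := by
      intro i h1 h2
      match hwi : w i with
      | .inl (a, τ) => exact ⟨a, τ, rfl⟩
      | .inr false =>
        exact absurd (hinj i 0 h2.le (Nat.zero_le k) (by rw [hwi, hw0])) h1.ne'
      | .inr true =>
        exact absurd (hinj i k h2.le le_rfl (by rw [hwi, hwk])) h2.ne
    have hk1 : k ≠ 1 := by
      rintro rfl
      have h := harc 0 one_pos
      rw [hw0, hwk] at h
      exact h
    have hk2 : 2 ≤ k := by omega
    obtain ⟨a, σ, hwk1⟩ := hint (k - 1) (by omega) (by omega)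
    have harck := harc (k - 1) (by omega)
    rw [show k - 1 + 1 = k from by omega, hwk1, hwk] at harck
    obtain ⟨tl, htl, htl1, htl2⟩ := harck
    refine ⟨fun i => match w i with | .inl p => p.1 | .inr false => s | .inr true => z,
      fun i => if i = k then tl else match w i with | .inl p => p.2 | .inr _ => 0,
      ?_, ?_, ?_, ?_, ?_⟩
    all_goals
      set v : ℕ → V := fun i => match w i with
        | .inl p => p.1 | .inr false => s | .inr true => z with hvdef
      set t : ℕ → ℕ := fun i => if i = k then tl
        else match w i with | .inl p => p.2 | .inr _ => 0 with htdef
      have hv0 : v 0 = s := by simp [hvdef, hw0]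
      have hvk : v k = z := by simp [hvdef, hwk]
      have hvi : ∀ i a₀ τ₀, w i = Sum.inl (a₀, τ₀) → v i = a₀ := by
        intro i a₀ τ₀ h; simp [hvdef, h]
      have hti : ∀ i a₀ τ₀, i ≠ k → w i = Sum.inl (a₀, τ₀) → t i = τ₀ := by
        intro i a₀ τ₀ hik h; simp [htdef, hik, h]
      have htk : t k = tl := by simp [htdef]
      have hval : ∀ i a₀ τ₀, i ≤ k → w i = Sum.inl (a₀, τ₀) → a₀ ≠ s ∧ a₀ ≠ z := by
        intro i a₀ τ₀ hik h
        have := hvalid i hik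
        rw [h] at this
        exact ⟨this.1, this.2.1⟩
    · exact hv0
    · exact hvk
    · -- distinctness
      intro i j hi hj heq
      rcases Nat.eq_zero_or_pos i with rfl | hi0 <;>
        rcases Nat.eq_zero_or_pos j with rfl | hj0
      · rfl
      · rcases eq_or_lt_of_le hj with rfl | hjk
        · rw [hv0, hvk] at heq; exact absurd heq hsz
        · obtain ⟨b, τ, hwj⟩ := hint j hj0 hjk
          rw [hv0, hvi j b τ hwj] at heq
          exact absurd heq.symm (hval j b τ hjk.le hwj).1
      · rcases eq_or_lt_of_le hi with rfl | hik
        · rw [hv0, hvk] at heq; exact absurd heq.symm hsz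
        · obtain ⟨b, τ, hwi'⟩ := hint i hi0 hik
          rw [hv0, hvi i b τ hwi'] at heq
          exact absurd heq (hval i b τ hik.le hwi').1
      · rcases eq_or_lt_of_le hi with rfl | hik <;>
          rcases eq_or_lt_of_le hj with h | hjk
        · omega
        · obtain ⟨b, τ, hwj⟩ := hint j hj0 hjk
          rw [hvk, hvi j b τ hwj] at heq
          exact absurd heq.symm (hval j b τ hjk.le hwj).2
        · obtain ⟨b, τ, hwi'⟩ := hint i hi0 hik
          rw [h, hvk, hvi i b τ hwi'] at heq
          exact absurd heq (hval i b τ hik.le hwi').2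
        · obtain ⟨b, τ, hwi'⟩ := hint i hi0 hik
          obtain ⟨c, τ', hwj⟩ := hint j hj0 hjk
          rw [hvi i b τ hwi', hvi j c τ' hwj] at heq
          exact hone b i j τ τ' hik.le hjk.le hwi' (heq ▸ hwj)
    · -- edges
      intro i hi1 hik
      rcases eq_or_lt_of_le hik with rfl | hik
      · rw [htk]
        refine ⟨hE1 tl _ htl, ?_⟩
        rw [hvi (i - 1) a σ hwk1, hvk]
        exact htl
      · obtain ⟨b, τ, hwib⟩ := hint i hi1 hik
        have h' := harc (i - 1) (by omega)
        rw [show i - 1 + 1 = i from by omega, hwib] at h'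
        rw [hti i b τ hik.ne hwib, hvi i b τ hwib]
        rcases eq_or_lt_of_le hi1 with rfl | hi2
        · rw [hw0] at h'
          refine ⟨hE1 τ _ h', ?_⟩
          have h01 : (1 : ℕ) - 1 = 0 := rfl
          rw [h01, hv0]
          exact h'
        · obtain ⟨a', σ', hwa⟩ := hint (i - 1) (by omega) (by omega)
          rw [hwa] at h'
          rw [hvi (i - 1) a' σ' hwa]
          exact ⟨hE1 τ _ h'.1, h'.1⟩
    · -- restless
      intro i hi1 hik
      obtain ⟨b, τ, hwib⟩ := hint i hi1 hik
      rw [hti i b τ hik.ne hwib]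
      rcases Nat.lt_or_ge (i + 1) k with hik1 | hik1
      · obtain ⟨c, τ', hwic⟩ := hint (i + 1) (by omega) hik1
        have h' := harc i hik
        rw [hwib, hwic] at h'
        rw [hti (i + 1) c τ' hik1.ne hwic]
        exact ⟨h'.2.1, h'.2.2⟩
      · have hik2 : i + 1 = k := by omega
        have hieq : i = k - 1 := by omega
        rw [hieq, hwk1] at hwib
        simp only [Sum.inl.injEq, Prod.mk.injEq] at hwib
        rw [hik2, htk, ← hwib.2]
        exact ⟨htl1, htl2⟩
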